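/- (Supporting hyperplane through prescribed points of a convex curve) Let σ : [a,b] → ℝ^d be an injective continuous convex curve, i.e., for every affine hyperplane H ⊂ ℝ^d the set {t ∈ [a,b] : σ(t) ∈ H} has at most d elements. Let 1 ≤ ℓ ≤ d and let a < t₁ < t₂ < ⋯ < t_ℓ < b be given points. Then there exists a nonconstant affine function L : ℝ^d → ℝ such that L(σ(t_i)) = 0 for every i = 1, …, ℓ, the composite L∘σ is not identically zero, and L∘σ changes sign only at the given points with alternation: there is ε ∈ {1,−1} such that ε·(−1)^j·L(σ(t)) ≥ 0 for all t in the j-th of the ℓ+1 intervals [a,t₁], [t₁,t₂], …, [t_ℓ,b] (j = 0, …, ℓ). -/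

import Mathlib

/-!
For parameters `z₀ < ⋯ < z_d` in `[a, b]` let `D z` be the determinant with rows `(1, σ (zᵢ))`.
It never vanishes, since a vanishing determinant yields a nonconstant affine function with
`d + 1` zeros on the curve; as increasing tuples form a convex set, `D` has a constant sign `τ`
on them. For increasing `s ∈ [a, b]ᵈ`, the affine function `x ↦ D (x, s₁, …, s_d)` therefore has
at `σ u` the sign `τ (-1)ᵏ`, where `k` is the number of `sᵢ` below `u`: sorting the tuple is a
cycle of sign `(-1)ᵏ`. Take `s = (t₁, …, t_ℓ)` followed by `d - ℓ` points crowding at `b`,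
normalise the coefficient vectors and pass to a limit point. The limit has the alternating sign
pattern away from `b`, hence also at `b` by continuity, and it vanishes at each `tᵢ`, where the
patterns of the two adjacent intervals meet.
-/

open Set Filter Topology Matrix

theorem IsPreconnected.exists_sign_mul_pos {X : Type*} [TopologicalSpace X] {S : Set X}
    {f : X → ℝ} (hS : IsPreconnected S) (hf : ContinuousOn f S) (hne : ∀ x ∈ S, f x ≠ 0) :
    ∃ τ : ℝ, (τ = 1 ∨ τ = -1) ∧ ∀ x ∈ S, 0 < τ * f x := by
  by_cases hneg : ∃ x₀ ∈ S, f x₀ < 0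
  · obtain ⟨x₀, hx₀, hfx₀⟩ := hneg
    refine ⟨-1, Or.inr rfl, fun x hx => ?_⟩
    by_contra! hfx
    obtain ⟨z, hz, hfz⟩ := hS.intermediate_value hx₀ hx hf ⟨hfx₀.le, by linarith⟩
    exact hne z hz hfz
  · simp only [not_exists, not_and, not_lt] at hneg
    exact ⟨1, Or.inl rfl, fun x hx => by
      simpa using lt_of_le_of_ne (hneg x hx) (hne x hx).symm⟩

theorem convex_setOf_strictMono {ι : Type*} [Preorder ι] :
    Convex ℝ {f : ι → ℝ | StrictMono f} := by
  intro f hf g hg μ ν hμ hν hμν i j hij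
  simp only [Pi.add_apply, Pi.smul_apply, smul_eq_mul]
  rcases hμ.eq_or_lt with rfl | hμ
  · simpa [show ν = 1 by linarith] using hg hij
  · exact add_lt_add_of_lt_of_le (mul_lt_mul_of_pos_left (hf hij) hμ)
      (mul_le_mul_of_nonneg_left (hg hij).le hν)

theorem exists_ne_zero_nonneg_of_eventually_nonneg {E ι X : Type*} [NormedAddCommGroup E]
    [NormedSpace ℝ E] [FiniteDimensional ℝ E] {l : Filter ι} [l.NeBot] {u : ι → E}
    (hu : ∀ᶠ i in l, u i ≠ 0) (φ : X → E →ₗ[ℝ] ℝ) (A : Set X)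
    (h : ∀ x ∈ A, ∀ᶠ i in l, 0 ≤ φ x (u i)) :
    ∃ U ≠ 0, ∀ x ∈ A, 0 ≤ φ x U := by
  set v : ι → E := fun i => ‖u i‖⁻¹ • u i
  have hv : map v l ≤ 𝓟 (Metric.sphere 0 1) :=
    le_principal_iff.2 (hu.mono fun i hi => by simp [v, norm_smul, hi])
  obtain ⟨U, hU, hclus⟩ := (isCompact_sphere (0 : E) 1).exists_clusterPt hv
  refine ⟨U, fun h => by simp [h] at hU, fun x hx => ?_⟩
  have hclosed : IsClosed {w | 0 ≤ φ x w} :=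
    isClosed_le continuous_const (φ x).continuous_of_finiteDimensional
  show U ∈ {w | 0 ≤ φ x w}
  rw [← hclosed.closure_eq]
  refine hclus.mem_closure_of_mem _ ((h x hx).mono fun i hi => ?_)
  simpa [v] using mul_nonneg (inv_nonneg.2 (norm_nonneg (u i))) hi

theorem nonneg_of_forall_Ico_nonneg {f : ℝ → ℝ} {T b : ℝ} (hTb : T < b)
    (hf : ContinuousOn f (Icc T b)) (h : ∀ x ∈ Ico T b, 0 ≤ f x) : 0 ≤ f b := by
  have := right_nhdsWithin_Ico_neBot hTb
  exact ge_of_tendsto ((hf.continuousWithinAt ⟨hTb.le, le_rfl⟩).mono Ico_subset_Icc_self)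
    (eventually_nhdsWithin_of_forall h)

theorem exists_strictMono_extend {ℓ d : ℕ} {t : Fin ℓ → ℝ} (ht : StrictMono t)
    {c b : ℝ} (htc : ∀ i, t i < c) (hcb : c < b) :
    ∃ s : Fin d → ℝ, StrictMono s ∧ (∀ (i : Fin d) (h : (i : ℕ) < ℓ), s i = t ⟨i, h⟩) ∧
      ∀ i : Fin d, ℓ ≤ (i : ℕ) → s i ∈ Ioo c b := by
  set g : ℕ → ℝ := fun k => b - (b - c) / (k + 2)
  have hg : StrictMono g := fun k k' hkk' => by
    have : (k : ℝ) < k' := by exact_mod_cast hkk'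
    simp only [g]
    gcongr
  have hgI : ∀ k, g k ∈ Ioo c b := fun k => by
    have hbc : 0 < b - c := by linarith
    refine ⟨?_, by simp only [g]; linarith [show 0 < (b - c) / (k + 2) by positivity]⟩
    have : (b - c) / (k + 2) < b - c := div_lt_self hbc (by linarith [k.cast_nonneg (α := ℝ)])
    simp only [g]
    linarith
  refine ⟨fun i => if h : (i : ℕ) < ℓ then t ⟨i, h⟩ else g i, fun i j hij => ?_,
    fun i h => dif_pos h, fun i h => by simpa [not_lt.2 h] using hgI i⟩
  have hij' : (i : ℕ) < j := hij
  by_cases hj : (j : ℕ) < ℓ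
  · simpa [hj, hij'.trans hj] using ht (show (⟨i, hij'.trans hj⟩ : Fin ℓ) < ⟨j, hj⟩ from hij')
  · by_cases hi : (i : ℕ) < ℓ
    · simpa [hi, hj] using (htc _).trans (hgI j).1
    · simpa [hi, hj] using hg hij'

section Curve

variable {d : ℕ}

def homogenize (x : Fin d → ℝ) : Fin (d + 1) → ℝ := Fin.cons 1 x

theorem continuous_homogenize : Continuous (homogenize : (Fin d → ℝ) → Fin (d + 1) → ℝ) :=
  continuous_const.finCons continuous_id

noncomputable def affineOfCoeffs (v : Fin (d + 1) → ℝ) : (Fin d → ℝ) →ᵃ[ℝ] ℝ :=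
  (dotProductBilin ℝ ℝ (Fin.tail v)).toAffineMap + AffineMap.const ℝ (Fin d → ℝ) (v 0)

theorem homogenize_dotProduct (x : Fin d → ℝ) (v : Fin (d + 1) → ℝ) :
    homogenize x ⬝ᵥ v = v 0 + x ⬝ᵥ Fin.tail v := by
  simp [homogenize, dotProduct, Fin.sum_univ_succ, Fin.tail]

theorem affineOfCoeffs_apply (v : Fin (d + 1) → ℝ) (x : Fin d → ℝ) :
    affineOfCoeffs v x = homogenize x ⬝ᵥ v := by
  rw [homogenize_dotProduct, dotProduct_comm x, add_comm]
  simp [affineOfCoeffs]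

theorem affineOfCoeffs_linear_ne_zero {v : Fin (d + 1) → ℝ} (hv : v ≠ 0) {x : Fin d → ℝ}
    (hx : homogenize x ⬝ᵥ v = 0) : (affineOfCoeffs v).linear ≠ 0 := by
  intro hL
  have htail : Fin.tail v = 0 := dotProduct_eq_zero _ fun w => by
    simpa [affineOfCoeffs] using LinearMap.congr_fun hL w
  have h0 : v 0 = 0 := by
    simpa [homogenize_dotProduct, htail] using hx
  exact hv (by rw [← Fin.cons_self_tail v, h0, htail]; exact cons_zero_zero)

def IsConvexCurveOn (σ : ℝ → Fin d → ℝ) (S : Set ℝ) : Prop :=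
  ∀ L : (Fin d → ℝ) →ᵃ[ℝ] ℝ, L.linear ≠ 0 → {t ∈ S | L (σ t) = 0}.encard ≤ d

noncomputable def curveDet (σ : ℝ → Fin d → ℝ) (z : Fin (d + 1) → ℝ) : ℝ :=
  (Matrix.of fun i => homogenize (σ (z i))).det

theorem IsConvexCurveOn.curveDet_ne_zero {σ : ℝ → Fin d → ℝ} {S : Set ℝ}
    (hconv : IsConvexCurveOn σ S) {z : Fin (d + 1) → ℝ} (hz : Function.Injective z)
    (hzS : ∀ i, z i ∈ S) : curveDet σ z ≠ 0 := by
  intro hdet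
  obtain ⟨v, hv, hMv⟩ := exists_mulVec_eq_zero_iff.2 hdet
  have hzero : ∀ i, homogenize (σ (z i)) ⬝ᵥ v = 0 := fun i => congrFun hMv i
  have hsub : range z ⊆ {t ∈ S | affineOfCoeffs v (σ t) = 0} := by
    rintro _ ⟨i, rfl⟩
    exact ⟨hzS i, by rw [affineOfCoeffs_apply, hzero]⟩
  have hcard := (encard_le_encard hsub).trans
    (hconv _ (affineOfCoeffs_linear_ne_zero hv (hzero 0)))
  rw [← image_univ, hz.injOn.encard_image, encard_univ, ENat.card_eq_coe_fintype_card,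
    Fintype.card_fin] at hcard
  exact absurd (ENat.natCast_le_natCast.1 hcard) (by omega)

theorem IsConvexCurveOn.exists_apply_ne_zero {σ : ℝ → Fin d → ℝ} {S : Set ℝ}
    (hconv : IsConvexCurveOn σ S) (hS : S.Infinite) {L : (Fin d → ℝ) →ᵃ[ℝ] ℝ}
    (hL : L.linear ≠ 0) : ∃ s ∈ S, L (σ s) ≠ 0 := by
  by_contra! h
  have hcard := hconv L hL
  rw [sep_eq_self_iff_mem_true.2 h, hS.encard_eq] at hcard
  exact absurd hcard (by simp)

theorem curveDet_comp_perm (σ : ℝ → Fin d → ℝ) (z : Fin (d + 1) → ℝ)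
    (π : Equiv.Perm (Fin (d + 1))) :
    curveDet σ (z ∘ π) = Equiv.Perm.sign π * curveDet σ z := by
  rw [curveDet, curveDet, ← det_permute]
  rfl

theorem exists_curveDet_cons_eq_dotProduct (σ : ℝ → Fin d → ℝ) (s : Fin d → ℝ) :
    ∃ v : Fin (d + 1) → ℝ, ∀ x, curveDet σ (Fin.cons x s) = homogenize (σ x) ⬝ᵥ v := by
  refine ⟨fun j => (-1) ^ (j : ℕ) *
    ((Matrix.of fun i => homogenize (σ (s i))).submatrix id j.succAbove).det, fun x => ?_⟩
  rw [curveDet, det_succ_row_zero, dotProduct]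
  refine Finset.sum_congr rfl fun j _ => ?_
  simp only [of_apply, Fin.cons_zero]
  ring_nf
  rfl

theorem continuousOn_curveDet {a b : ℝ} {σ : ℝ → Fin d → ℝ} (hσc : ContinuousOn σ (Icc a b)) :
    ContinuousOn (curveDet σ) {z | ∀ i, z i ∈ Icc a b} := by
  refine (continuous_id.matrix_det).comp_continuousOn
    (continuousOn_pi.2 fun i => continuous_homogenize.comp_continuousOn ?_)
  exact hσc.comp (continuous_apply i).continuousOn fun z hz => hz i

theorem exists_sign_curveDet {a b : ℝ} {σ : ℝ → Fin d → ℝ} (hσc : ContinuousOn σ (Icc a b))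
    (hne : ∀ z, StrictMono z → (∀ i, z i ∈ Icc a b) → curveDet σ z ≠ 0) :
    ∃ τ : ℝ, (τ = 1 ∨ τ = -1) ∧
      ∀ z, StrictMono z → (∀ i, z i ∈ Icc a b) → 0 < τ * curveDet σ z := by
  have hS : Convex ℝ ({z | StrictMono z} ∩ {z : Fin (d + 1) → ℝ | ∀ i, z i ∈ Icc a b}) :=
    convex_setOf_strictMono.inter
      (by simpa [Set.pi] using convex_pi (s := univ) fun _ _ => convex_Icc a b)
  obtain ⟨τ, hτ, hpos⟩ := hS.isPreconnected.exists_sign_mul_pos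
    ((continuousOn_curveDet hσc).mono inter_subset_right) fun z hz => hne z hz.1 hz.2
  exact ⟨τ, hτ, fun z hz hzI => hpos z ⟨hz, hzI⟩⟩

theorem mul_curveDet_cons_pos {τ a b : ℝ} {σ : ℝ → Fin d → ℝ}
    (hτ : ∀ z, StrictMono z → (∀ i, z i ∈ Icc a b) → 0 < τ * curveDet σ z)
    {x : ℝ} {s : Fin d → ℝ} (hx : x ∈ Icc a b) (hsI : ∀ i, s i ∈ Icc a b) {k : Fin (d + 1)}
    (hk : StrictMono (k.insertNth (α := fun _ => ℝ) x s)) :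
    0 < τ * (-1) ^ (k : ℕ) * curveDet σ (Fin.cons x s) := by
  have hI : ∀ i, k.insertNth (α := fun _ => ℝ) x s i ∈ Icc a b :=
    (Fin.forall_iff_succAbove k).2 ⟨by simpa using hx, fun j => by simpa using hsI j⟩
  have := hτ _ hk hI
  rwa [← Fin.cons_comp_cycleRange, curveDet_comp_perm, Fin.sign_cycleRange, ← mul_assoc,
    Units.val_pow_eq_pow_val, Units.val_neg, Units.val_one, Int.cast_pow, Int.cast_neg,
    Int.cast_one] at this

end Curve

section Knots

variable {ℓ : ℕ}

def knots (a : ℝ) (t : Fin ℓ → ℝ) (b : ℝ) : Fin (ℓ + 2) → ℝ := Fin.cons a (Fin.snoc t b)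

def knotInterval (a : ℝ) (t : Fin ℓ → ℝ) (b : ℝ) (j : Fin (ℓ + 1)) : Set ℝ :=
  Icc (knots a t b j.castSucc) (knots a t b j.succ)

@[simp] theorem knots_last (a : ℝ) (t : Fin ℓ → ℝ) (b : ℝ) :
    knots a t b (Fin.last (ℓ + 1)) = b := by
  simp [knots, ← Fin.succ_last]

@[simp] theorem knots_succ_castSucc (a : ℝ) (t : Fin ℓ → ℝ) (b : ℝ) (i : Fin ℓ) :
    knots a t b i.castSucc.succ = t i := by
  simp [knots]

theorem strictMono_knots {a b : ℝ} (hab : a < b) {t : Fin ℓ → ℝ}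
    (ht : StrictMono t) (htI : ∀ i, t i ∈ Ioo a b) : StrictMono (knots a t b) := by
  have hsnoc : StrictMono (Fin.snoc t b : Fin (ℓ + 1) → ℝ) := by
    rw [← Fin.insertNth_last', Fin.strictMono_insertNth_iff]
    exact ⟨ht, fun i _ => (htI i).2, fun i hi => absurd hi (not_le.2 (Fin.castSucc_lt_last i))⟩
  refine Fin.strictMono_cons.2 ⟨fun j => ?_, hsnoc⟩
  induction j using Fin.lastCases with
  | last => simpa using hab
  | cast i => simpa using (htI i).1

theorem le_of_mem_knotInterval {a b : ℝ} {t : Fin ℓ → ℝ} (hknots : Monotone (knots a t b))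
    {j : Fin (ℓ + 1)} {x : ℝ} (hx : x ∈ knotInterval a t b j) (i : Fin ℓ) :
    ((i : ℕ) < j → t i ≤ x) ∧ ((j : ℕ) ≤ i → x ≤ t i) := by
  refine ⟨fun hij => ?_, fun hji => ?_⟩
  · rw [← knots_succ_castSucc a t b i, Fin.succ_castSucc]
    exact (hknots (Fin.le_def.2 (by simpa using hij))).trans hx.1
  · rw [← knots_succ_castSucc a t b i]
    exact hx.2.trans (hknots (Fin.le_def.2 (by simpa using hji)))

theorem eq_zero_of_sign_alternating {a b τ : ℝ} {t : Fin ℓ → ℝ} {g : ℝ → ℝ} (hτ : τ ≠ 0)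
    (hknots : Monotone (knots a t b))
    (hg : ∀ j, ∀ x ∈ knotInterval a t b j, 0 ≤ τ * (-1) ^ (j : ℕ) * g x) (i : Fin ℓ) :
    g (t i) = 0 := by
  have h₁ := hg i.castSucc (t i) ⟨(hknots (Fin.castSucc_le_succ _)).trans_eq (by simp), by simp⟩
  have h₂ := hg i.succ (t i)
    ⟨by simp, (hknots (Fin.castSucc_le_succ _)).trans_eq' (by simp)⟩
  have h₃ : τ * (-1) ^ (i.succ : ℕ) * g (t i) = -(τ * (-1) ^ (i.castSucc : ℕ) * g (t i)) := by
    simp only [Fin.val_succ, Fin.val_castSucc, pow_succ]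
    ring
  have h₄ : τ * (-1) ^ (i.castSucc : ℕ) * g (t i) = 0 := by linarith
  simpa [hτ] using h₄

theorem sign_alternating_of_forall_lt {a b τ : ℝ} {t : Fin ℓ → ℝ} {g : ℝ → ℝ}
    (hknots : StrictMono (knots a t b)) (hg : ContinuousOn g (Icc a b))
    (h : ∀ j, ∀ x ∈ knotInterval a t b j, x < b → 0 ≤ τ * (-1) ^ (j : ℕ) * g x)
    (j : Fin (ℓ + 1)) (x : ℝ) (hx : x ∈ knotInterval a t b j) :
    0 ≤ τ * (-1) ^ (j : ℕ) * g x := by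
  have hxb : x ≤ b := hx.2.trans (by simpa using hknots.monotone (Fin.le_last j.succ))
  by_cases hxb' : x < b
  · exact h j x hx hxb'
  obtain rfl : b = x := le_antisymm (not_lt.1 hxb') hxb
  obtain rfl : j = Fin.last ℓ := by
    by_contra hj
    have := hknots (Fin.succ_lt_succ_iff.2 (Fin.lt_last_iff_ne_last.2 hj))
    simp only [Fin.succ_last, knots_last] at this
    exact this.not_ge hx.2
  have hTb : knots a t b (Fin.last ℓ).castSucc < b := by
    simpa using hknots (Fin.castSucc_lt_last (Fin.last ℓ))
  have haT : a ≤ knots a t b (Fin.last ℓ).castSucc := hknots.monotone (Fin.zero_le _)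
  exact nonneg_of_forall_Ico_nonneg (f := fun x => τ * (-1) ^ ℓ * g x) hTb
    (continuousOn_const.mul (hg.mono (Icc_subset_Icc haT le_rfl)))
    fun y hyI => by simpa using h (Fin.last ℓ) y ⟨hyI.1, hyI.2.le.trans_eq (by simp)⟩ hyI.2

end Knots

section Alternation

variable {d ℓ : ℕ} {τ a b : ℝ} {σ : ℝ → Fin d → ℝ} {t : Fin ℓ → ℝ}

theorem mul_curveDet_cons_nonneg
    (hτ : ∀ z, StrictMono z → (∀ i, z i ∈ Icc a b) → 0 < τ * curveDet σ z) (hℓd : ℓ ≤ d)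
    (hknots : StrictMono (knots a t b)) {s : Fin d → ℝ} (hs : StrictMono s)
    (hsI : ∀ i, s i ∈ Icc a b) (hst : ∀ (i : Fin d) (h : (i : ℕ) < ℓ), s i = t ⟨i, h⟩)
    {j : Fin (ℓ + 1)} {x : ℝ} (hx : x ∈ knotInterval a t b j)
    (hxs : ∀ i : Fin d, ℓ ≤ (i : ℕ) → x < s i) :
    0 ≤ τ * (-1) ^ (j : ℕ) * curveDet σ (Fin.cons x s) := by
  have hxI : x ∈ Icc a b :=
    ⟨(hknots.monotone (Fin.zero_le _)).trans hx.1,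
      by simpa using hx.2.trans (hknots.monotone (Fin.le_last _))⟩
  have hregion := le_of_mem_knotInterval hknots.monotone hx
  by_cases hxt : ∃ i, t i = x
  · obtain ⟨i, rfl⟩ := hxt
    have hi : (i : ℕ) < d := i.2.trans_le hℓd
    rw [curveDet, det_zero_of_row_eq (Fin.succ_ne_zero (⟨i, hi⟩ : Fin d)).symm, mul_zero]
    funext k
    simp only [of_apply, Fin.cons_zero, Fin.cons_succ, hst ⟨i, hi⟩ i.2]
  · push Not at hxt
    refine (mul_curveDet_cons_pos hτ hxI hsI (k := Fin.castLE (by omega) j) ?_).le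
    rw [Fin.strictMono_insertNth_iff]
    refine ⟨hs, fun i hi => ?_, fun i hi => ?_⟩
    · have hij : (i : ℕ) < j := hi
      rw [hst i (hij.trans_le (Nat.lt_succ_iff.1 j.2))]
      exact ((hregion _).1 hij).lt_of_ne (hxt _)
    · have hji : (j : ℕ) ≤ i := hi
      by_cases hiℓ : (i : ℕ) < ℓ
      · rw [hst i hiℓ]
        exact ((hregion _).2 hji).lt_of_ne (hxt _).symm
      · exact hxs i (not_lt.1 hiℓ)

theorem exists_coeffs_sign_alternating
    (hτ : ∀ z, StrictMono z → (∀ i, z i ∈ Icc a b) → 0 < τ * curveDet σ z) (hab : a < b)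
    (hℓd : ℓ ≤ d) (ht : StrictMono t) (htI : ∀ i, t i ∈ Ioo a b) :
    ∃ U : Fin (d + 1) → ℝ, U ≠ 0 ∧ ∀ j, ∀ x ∈ knotInterval a t b j, x < b →
      0 ≤ τ * (-1) ^ (j : ℕ) * (homogenize (σ x) ⬝ᵥ U) := by
  have hknots := strictMono_knots hab ht htI
  choose! s hs hst hsc using fun c (hc : c ∈ Ioo a b ∧ ∀ i, t i < c) =>
    exists_strictMono_extend (d := d) ht hc.2 hc.1.2
  choose u hu using fun c => exists_curveDet_cons_eq_dotProduct σ (s c)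
  have hgood : ∀ᶠ c in 𝓝[<] b, c ∈ Ioo a b ∧ ∀ i, t i < c :=
    Eventually.and (Ioo_mem_nhdsLT hab) (eventually_all.2 fun i =>
      mem_of_superset (Ioo_mem_nhdsLT (htI i).2) fun c hc => hc.1)
  have hsI : ∀ c, c ∈ Ioo a b ∧ (∀ i, t i < c) → ∀ i, s c i ∈ Ioo a b := by
    intro c hc i
    by_cases hi : (i : ℕ) < ℓ
    · simpa [hst c hc i hi] using htI ⟨i, hi⟩
    · exact ⟨hc.1.1.trans (hsc c hc i (not_lt.1 hi)).1, (hsc c hc i (not_lt.1 hi)).2⟩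
  have hu0 : ∀ᶠ c in 𝓝[<] b, u c ≠ 0 := hgood.mono fun c hc hzero => by
    have := mul_curveDet_cons_pos hτ (left_mem_Icc.2 hab.le)
      (fun i => Ioo_subset_Icc_self (hsI c hc i)) (k := 0) (x := a)
      (by simpa [Fin.strictMono_cons, hs c hc] using fun i => (hsI c hc i).1)
    simp [hu, hzero] at this
  obtain ⟨U, hU, hUnonneg⟩ := exists_ne_zero_nonneg_of_eventually_nonneg hu0
    (fun p : Fin (ℓ + 1) × ℝ =>
      (τ * (-1) ^ (p.1 : ℕ)) • dotProductBilin ℝ ℝ (homogenize (σ p.2)))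
    {p | p.2 ∈ knotInterval a t b p.1 ∧ p.2 < b}
    (fun p hp => by
      filter_upwards [hgood, Ioo_mem_nhdsLT hp.2] with c hc hxc
      have := mul_curveDet_cons_nonneg hτ hℓd hknots (hs c hc)
        (fun i => Ioo_subset_Icc_self (hsI c hc i)) (hst c hc) hp.1
        (fun i hi => hxc.1.trans (hsc c hc i hi).1)
      simpa [hu] using this)
  exact ⟨U, hU, fun j x hx hxb => by simpa using hUnonneg (j, x) ⟨hx, hxb⟩⟩

end Alternation

theorem exists_supporting_hyperplane_through_points_general
    (d : ℕ) (a b : ℝ) (hab : a < b) (σ : ℝ → Fin d → ℝ)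
    (hσc : ContinuousOn σ (Set.Icc a b))
    (hconv : ∀ L : (Fin d → ℝ) →ᵃ[ℝ] ℝ, L.linear ≠ 0 →
      {t ∈ Set.Icc a b | L (σ t) = 0}.encard ≤ d)
    (ℓ : ℕ) (hℓ1 : 1 ≤ ℓ) (hℓd : ℓ ≤ d)
    (t : Fin ℓ → ℝ) (ht : StrictMono t) (htmem : ∀ i, t i ∈ Set.Ioo a b) :
    ∃ L : (Fin d → ℝ) →ᵃ[ℝ] ℝ, L.linear ≠ 0 ∧ (∀ i, L (σ (t i)) = 0) ∧
      (∃ s ∈ Set.Icc a b, L (σ s) ≠ 0) ∧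
      ∃ ε : ℝ, (ε = 1 ∨ ε = -1) ∧ ∀ j : Fin (ℓ + 1),
        ∀ s ∈ Set.Icc ((Fin.cons a (Fin.snoc t b) : Fin (ℓ + 2) → ℝ) j.castSucc)
          ((Fin.cons a (Fin.snoc t b) : Fin (ℓ + 2) → ℝ) j.succ),
          0 ≤ ε * (-1) ^ (j : ℕ) * L (σ s) := by
  obtain ⟨τ, hτ, hτpos⟩ := exists_sign_curveDet hσc fun z hz hzI =>
    IsConvexCurveOn.curveDet_ne_zero hconv hz.injective hzI
  obtain ⟨U, hU, hUsign⟩ := exists_coeffs_sign_alternating hτpos hab hℓd ht htmem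
  have hknots := strictMono_knots hab ht htmem
  have hsign := sign_alternating_of_forall_lt hknots
    ((continuous_homogenize.dotProduct continuous_const).comp_continuousOn hσc) hUsign
  have hzero := eq_zero_of_sign_alternating (by rcases hτ with rfl | rfl <;> norm_num)
    hknots.monotone hsign
  have hL := affineOfCoeffs_linear_ne_zero hU (hzero ⟨0, hℓ1⟩)
  refine ⟨affineOfCoeffs U, hL, fun i => ?_,
    IsConvexCurveOn.exists_apply_ne_zero hconv (Icc_infinite hab) hL, τ, hτ, fun j x hx => ?_⟩
  · rw [affineOfCoeffs_apply]
    exact hzero i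
  · rw [affineOfCoeffs_apply]
    exact hsign j x hx

/-- Supporting hyperplane through prescribed points of a convex curve: given an
injective continuous convex curve `σ : [a,b] → ℝ^d` and points
`a < t₁ < ⋯ < t_ℓ < b` with `1 ≤ ℓ ≤ d`, there is a nonconstant affine function `L`
vanishing at the `σ(tᵢ)`, with `L∘σ` not identically zero on `[a,b]`, such that `L∘σ`
changes sign only at the given points with alternation. Here
`y = Fin.cons a (Fin.snoc t b)` is the extended sequence
`a = y₀ < y₁ = t₁ < ⋯ < y_ℓ = t_ℓ < y_{ℓ+1} = b`. -/
theorem exists_supporting_hyperplane_through_points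
    (d : ℕ) (a b : ℝ) (hab : a < b) (σ : ℝ → Fin d → ℝ)
    (hσc : ContinuousOn σ (Set.Icc a b)) (hσinj : Set.InjOn σ (Set.Icc a b))
    (hconv : ∀ L : (Fin d → ℝ) →ᵃ[ℝ] ℝ, L.linear ≠ 0 →
      {t ∈ Set.Icc a b | L (σ t) = 0}.encard ≤ d)
    (ℓ : ℕ) (hℓ1 : 1 ≤ ℓ) (hℓd : ℓ ≤ d)
    (t : Fin ℓ → ℝ) (ht : StrictMono t) (htmem : ∀ i, t i ∈ Set.Ioo a b) :
    ∃ L : (Fin d → ℝ) →ᵃ[ℝ] ℝ, L.linear ≠ 0 ∧ (∀ i, L (σ (t i)) = 0) ∧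
      (∃ s ∈ Set.Icc a b, L (σ s) ≠ 0) ∧
      ∃ ε : ℝ, (ε = 1 ∨ ε = -1) ∧ ∀ j : Fin (ℓ + 1),
        ∀ s ∈ Set.Icc ((Fin.cons a (Fin.snoc t b) : Fin (ℓ + 2) → ℝ) j.castSucc)
          ((Fin.cons a (Fin.snoc t b) : Fin (ℓ + 2) → ℝ) j.succ),
          0 ≤ ε * (-1) ^ (j : ℕ) * L (σ s) :=
  exists_supporting_hyperplane_through_points_general d a b hab σ hσc hconv ℓ hℓ1 hℓd t ht htmem
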